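/- arXiv:1812.06537 — 8 statements merged into one kernel-verified Lean document; each statement's English description precedes it below -/
import Mathlib

section
/- Under Assumptions 1–5 (continuity of conditional potential outcomes, independence of treatment from potential outcomes, cross-cohort constancy of the confounding policy effect, existence and nondegeneracy of the one-sided limits, and equality of all treatment-probability discontinuities at the cutoff), the fuzzy difference-in-discontinuities estimand τ = (Ỹ⁺−Ỹ⁻)/(T̃⁺−T̃⁻) − (Ȳ⁺−Ȳ⁻)/(M̄⁺−M̄⁻) equals the average treatment effect ATE_O(t) = E[Y(1,1)−Y(0,1)|X=t]. -/
open Filter Topology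

lemma young_limit_eq {t : ℝ} {l : Filter ℝ} [l.NeBot] (hl : l ≤ 𝓝 t)
    {y11 y10 y01 y00 EY EO EM ET : ℝ → ℝ}
    (h11 : ContinuousAt y11 t) (h10 : ContinuousAt y10 t)
    (h01 : ContinuousAt y01 t) (h00 : ContinuousAt y00 t)
    (hY : ∀ x, EY x = y00 x + EM x * (y01 x - y00 x) + EO x * (y10 x - y00 x)
        + ET x * (y11 x - y10 x - y01 x + y00 x))
    {O M T Y : ℝ}
    (hO : Tendsto EO l (𝓝 O)) (hM : Tendsto EM l (𝓝 M)) (hT : Tendsto ET l (𝓝 T))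
    (hYl : Tendsto EY l (𝓝 Y)) :
    Y = y00 t + M * (y01 t - y00 t) + O * (y10 t - y00 t)
        + T * (y11 t - y10 t - y01 t + y00 t) := by
  have t11 : Tendsto y11 l (𝓝 (y11 t)) := h11.tendsto.mono_left hl
  have t10 : Tendsto y10 l (𝓝 (y10 t)) := h10.tendsto.mono_left hl
  have t01 : Tendsto y01 l (𝓝 (y01 t)) := h01.tendsto.mono_left hl
  have t00 : Tendsto y00 l (𝓝 (y00 t)) := h00.tendsto.mono_left hl
  have h2 : Tendsto EY l (𝓝 (y00 t + M * (y01 t - y00 t) + O * (y10 t - y00 t)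
      + T * (y11 t - y10 t - y01 t + y00 t))) := by
    have : Tendsto (fun x => y00 x + EM x * (y01 x - y00 x) + EO x * (y10 x - y00 x)
        + ET x * (y11 x - y10 x - y01 x + y00 x)) l (𝓝 (y00 t + M * (y01 t - y00 t)
        + O * (y10 t - y00 t) + T * (y11 t - y10 t - y01 t + y00 t))) :=
      ((t00.add (hM.mul (t01.sub t00))).add (hO.mul (t10.sub t00))).add
        (hT.mul (((t11.sub t10).sub t01).add t00))
    exact this.congr (fun x => (hY x).symm)
  exact tendsto_nhds_unique hYl h2

lemma old_limit_eq {t : ℝ} {l : Filter ℝ} [l.NeBot] (hl : l ≤ 𝓝 t)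
    {z1 z0 EYb EMb : ℝ → ℝ}
    (hz1 : ContinuousAt z1 t) (hz0 : ContinuousAt z0 t)
    (hYb : ∀ x, EYb x = z0 x + EMb x * (z1 x - z0 x))
    {M Y : ℝ} (hM : Tendsto EMb l (𝓝 M)) (hYl : Tendsto EYb l (𝓝 Y)) :
    Y = z0 t + M * (z1 t - z0 t) := by
  have t1 : Tendsto z1 l (𝓝 (z1 t)) := hz1.tendsto.mono_left hl
  have t0 : Tendsto z0 l (𝓝 (z0 t)) := hz0.tendsto.mono_left hl
  have h2 : Tendsto EYb l (𝓝 (z0 t + M * (z1 t - z0 t))) :=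
    (t0.add (hM.mul (t1.sub t0))).congr (fun x => (hYb x).symm)
  exact tendsto_nhds_unique hYl h2

/-- Theorem 1: Under Assumptions 1–5 the fuzzy difference-in-discontinuities
estimand `τ = (Ỹ⁺−Ỹ⁻)/(T̃⁺−T̃⁻) − (Ȳ⁺−Ȳ⁻)/(M̄⁺−M̄⁻)` equals
`ATE_O(t) = E[Y(1,1)−Y(0,1)|X=t]`.

Here `y o m` (resp. `z m`) is the function `x ↦ E[Y(o,m)|X=x]` in the young (resp. old) cohort;
`EY, EO, EM, ET` (resp. `EYb, EMb`) are the conditional means of the observed outcome and of the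
treatments `O`, `M`, `T = O·M` in the young (resp. old) cohort.  Assumption 2 (independence of
treatment from potential outcomes near the cutoff) is encoded by the switching identities `hY`
and `hYb` for the observed conditional means. -/
theorem fuzzy_diff_in_disc_identification
    (t : ℝ)
    (y11 y10 y01 y00 z1 z0 : ℝ → ℝ)
    (EY EO EM ET EYb EMb : ℝ → ℝ)
    -- Assumption 1: continuity of the conditional potential-outcome means at the cutoff
    (h11 : ContinuousAt y11 t) (h10 : ContinuousAt y10 t)
    (h01 : ContinuousAt y01 t) (h00 : ContinuousAt y00 t)
    (hz1 : ContinuousAt z1 t) (hz0 : ContinuousAt z0 t)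
    -- Assumption 2: independence (switching identity for the observed conditional means)
    (hY : ∀ x, EY x = y00 x + EM x * (y01 x - y00 x) + EO x * (y10 x - y00 x)
        + ET x * (y11 x - y10 x - y01 x + y00 x))
    (hYb : ∀ x, EYb x = z0 x + EMb x * (z1 x - z0 x))
    -- Assumption 3: cross-cohort constancy of the confounding policy effect
    (hA3 : z1 t - z0 t = y01 t - y00 t)
    -- Assumption 4: existence of the one-sided limits, with nondegenerate jumps
    (Op Om Mp Mm Tp Tm Yp Ym Mbp Mbm Ybp Ybm : ℝ)
    (hOp : Tendsto EO (𝓝[>] t) (𝓝 Op)) (hOm : Tendsto EO (𝓝[<] t) (𝓝 Om))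
    (hMp : Tendsto EM (𝓝[>] t) (𝓝 Mp)) (hMm : Tendsto EM (𝓝[<] t) (𝓝 Mm))
    (hTp : Tendsto ET (𝓝[>] t) (𝓝 Tp)) (hTm : Tendsto ET (𝓝[<] t) (𝓝 Tm))
    (hYp : Tendsto EY (𝓝[>] t) (𝓝 Yp)) (hYm : Tendsto EY (𝓝[<] t) (𝓝 Ym))
    (hMbp : Tendsto EMb (𝓝[>] t) (𝓝 Mbp)) (hMbm : Tendsto EMb (𝓝[<] t) (𝓝 Mbm))
    (hYbp : Tendsto EYb (𝓝[>] t) (𝓝 Ybp)) (hYbm : Tendsto EYb (𝓝[<] t) (𝓝 Ybm))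
    (hOne : Op ≠ Om) (hMne : Mp ≠ Mm) (hTne : Tp ≠ Tm) (hMbne : Mbp ≠ Mbm)
    -- Assumption 5: equality of all treatment-probability discontinuities at the cutoff
    (hA5a : Op - Om = Tp - Tm) (hA5b : Tp - Tm = Mp - Mm) :
    (Yp - Ym) / (Tp - Tm) - (Ybp - Ybm) / (Mbp - Mbm) = y11 t - y01 t := by

  have hle1 : 𝓝[>] t ≤ 𝓝 t := nhdsWithin_le_nhds
  have hle2 : 𝓝[<] t ≤ 𝓝 t := nhdsWithin_le_nhds
  have eYp := young_limit_eq hle1 h11 h10 h01 h00 hY hOp hMp hTp hYp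
  have eYm := young_limit_eq hle2 h11 h10 h01 h00 hY hOm hMm hTm hYm
  have eYbp := old_limit_eq hle1 hz1 hz0 hYb hMbp hYbp
  have eYbm := old_limit_eq hle2 hz1 hz0 hYb hMbm hYbm
  have hTne' : Tp - Tm ≠ 0 := sub_ne_zero.mpr hTne
  have hMbne' : Mbp - Mbm ≠ 0 := sub_ne_zero.mpr hMbne
  have hOeq : Op - Om = Tp - Tm := hA5a
  have hMeq : Mp - Mm = Tp - Tm := hA5b.symm
  have h1 : (Yp - Ym) / (Tp - Tm) = y11 t - y00 t := by
    rw [eYp, eYm, div_eq_iff hTne']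
    linear_combination (y01 t - y00 t) * hMeq + (y10 t - y00 t) * hOeq
  have h2 : (Ybp - Ybm) / (Mbp - Mbm) = y01 t - y00 t := by
    rw [eYbp, eYbm, ← hA3]
    field_simp
    ring
  rw [h1, h2]; ring
end

section
/- Under the dominance condition O ≥ M almost surely together with Assumptions 1–3 and the limit/jump conditions (Assumption 4'), the fuzzy difference-in-discontinuities estimand τ = (Ỹ⁺−Ỹ⁻)/(T̃⁺−T̃⁻) − (Ȳ⁺−Ȳ⁻)/(M̄⁺−M̄⁻) identifies the average treatment effect ATE_O(t) = E[Y(1,1)−Y(0,1)|X=t]. -/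
/-!
Under dominance `M ≤ O`, a binary `O` equals `1` wherever `M` does, so `T = O·M = M` and the
jump of `T̃` is the jump of `M̃`. Passing to one-sided limits in the switching identities, the
young-cohort jump of `Ỹ` is `(M̃⁺−M̃⁻)(y₁₁−y₀₀)` once the `Õ` jump is replaced by the `M̃` jump,
and the old-cohort jump of `Ȳ` is `(M̄⁺−M̄⁻)(z₁−z₀) = (M̄⁺−M̄⁻)(y₀₁−y₀₀)` by Assumption 3.
Dividing and subtracting leaves `y₁₁−y₀₁`.
-/

open MeasureTheory Filter Topology

theorem mul_eq_right_of_le_of_binary {o m : ℝ} (ho : o = 0 ∨ o = 1) (hm : m = 0 ∨ m = 1)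
    (hmo : m ≤ o) : o * m = m := by
  rcases hm with rfl | rfl
  · exact mul_zero o
  · rcases ho with rfl | rfl
    · norm_num at hmo
    · exact one_mul 1

theorem integral_mul_eq_integral_of_ae_le {Ω : Type*} [MeasurableSpace Ω] {μ ν : Measure Ω}
    (hν : ν ≪ μ) {O M : Ω → ℝ} (hO : ∀ ω, O ω = 0 ∨ O ω = 1) (hM : ∀ ω, M ω = 0 ∨ M ω = 1)
    (hdom : ∀ᵐ ω ∂μ, M ω ≤ O ω) : ∫ ω, O ω * M ω ∂ν = ∫ ω, M ω ∂ν :=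
  integral_congr_ae <| hν.ae_le <| hdom.mono fun ω => mul_eq_right_of_le_of_binary (hO ω) (hM ω)

section OneSidedLimits

variable {l : Filter ℝ} [l.NeBot] {t : ℝ}

theorem limit_eq_of_two_treatment_switching (hl : l ≤ 𝓝 t)
    {y11 y10 y01 y00 EY EO EM ET : ℝ → ℝ} {Y o m τ : ℝ}
    (hY : ∀ x, EY x = y00 x + EM x * (y01 x - y00 x) + EO x * (y10 x - y00 x)
        + ET x * (y11 x - y10 x - y01 x + y00 x))
    (h11 : ContinuousAt y11 t) (h10 : ContinuousAt y10 t)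
    (h01 : ContinuousAt y01 t) (h00 : ContinuousAt y00 t)
    (hO : Tendsto EO l (𝓝 o)) (hM : Tendsto EM l (𝓝 m)) (hT : Tendsto ET l (𝓝 τ))
    (hYlim : Tendsto EY l (𝓝 Y)) :
    Y = y00 t + m * (y01 t - y00 t) + o * (y10 t - y00 t)
        + τ * (y11 t - y10 t - y01 t + y00 t) := by
  have lim : ∀ {f : ℝ → ℝ}, ContinuousAt f t → Tendsto f l (𝓝 (f t)) :=
    fun hf => hf.tendsto.mono_left hl
  refine tendsto_nhds_unique (hYlim.congr hY) ?_
  exact (((lim h00).add (hM.mul ((lim h01).sub (lim h00)))).add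
    (hO.mul ((lim h10).sub (lim h00)))).add
    (hT.mul ((((lim h11).sub (lim h10)).sub (lim h01)).add (lim h00)))

theorem limit_eq_of_one_treatment_switching (hl : l ≤ 𝓝 t) {z1 z0 EY EM : ℝ → ℝ} {Y m : ℝ}
    (hY : ∀ x, EY x = z0 x + EM x * (z1 x - z0 x))
    (hz1 : ContinuousAt z1 t) (hz0 : ContinuousAt z0 t)
    (hM : Tendsto EM l (𝓝 m)) (hYlim : Tendsto EY l (𝓝 Y)) :
    Y = z0 t + m * (z1 t - z0 t) := by
  have lim : ∀ {f : ℝ → ℝ}, ContinuousAt f t → Tendsto f l (𝓝 (f t)) :=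
    fun hf => hf.tendsto.mono_left hl
  exact tendsto_nhds_unique (hYlim.congr hY) ((lim hz0).add (hM.mul ((lim hz1).sub (lim hz0))))

end OneSidedLimits

theorem fuzzy_diff_in_disc_identification_dominance_general
    {Ω : Type*} [MeasurableSpace Ω]
    (μ : Measure Ω)
    (ν : ℝ → Measure Ω)
    (hν : ∀ x, ν x ≪ μ)
    (O M : Ω → ℝ)
    (hO01 : ∀ ω, O ω = 0 ∨ O ω = 1) (hM01 : ∀ ω, M ω = 0 ∨ M ω = 1)
    -- Assumption 4' (iii), first part: dominance
    (hdom : ∀ᵐ ω ∂μ, M ω ≤ O ω)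
    (t : ℝ)
    (y11 y10 y01 y00 z1 z0 : ℝ → ℝ)
    (EY EO EM ET EYb EMb : ℝ → ℝ)
    (hEM : ∀ x, EM x = ∫ ω, M ω ∂(ν x))
    (hET : ∀ x, ET x = ∫ ω, O ω * M ω ∂(ν x))
    -- Assumption 1
    (h11 : ContinuousAt y11 t) (h10 : ContinuousAt y10 t)
    (h01 : ContinuousAt y01 t) (h00 : ContinuousAt y00 t)
    (hz1 : ContinuousAt z1 t) (hz0 : ContinuousAt z0 t)
    -- Assumption 2 (switching identities)
    (hY : ∀ x, EY x = y00 x + EM x * (y01 x - y00 x) + EO x * (y10 x - y00 x)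
        + ET x * (y11 x - y10 x - y01 x + y00 x))
    (hYb : ∀ x, EYb x = z0 x + EMb x * (z1 x - z0 x))
    -- Assumption 3
    (hA3 : z1 t - z0 t = y01 t - y00 t)
    -- Assumption 4' (i), (ii)
    (Op Om Mp Mm Tp Tm Yp Ym Mbp Mbm Ybp Ybm : ℝ)
    (hOp : Tendsto EO (𝓝[>] t) (𝓝 Op)) (hOm : Tendsto EO (𝓝[<] t) (𝓝 Om))
    (hMp : Tendsto EM (𝓝[>] t) (𝓝 Mp)) (hMm : Tendsto EM (𝓝[<] t) (𝓝 Mm))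
    (hTp : Tendsto ET (𝓝[>] t) (𝓝 Tp)) (hTm : Tendsto ET (𝓝[<] t) (𝓝 Tm))
    (hYp : Tendsto EY (𝓝[>] t) (𝓝 Yp)) (hYm : Tendsto EY (𝓝[<] t) (𝓝 Ym))
    (hMbp : Tendsto EMb (𝓝[>] t) (𝓝 Mbp)) (hMbm : Tendsto EMb (𝓝[<] t) (𝓝 Mbm))
    (hYbp : Tendsto EYb (𝓝[>] t) (𝓝 Ybp)) (hYbm : Tendsto EYb (𝓝[<] t) (𝓝 Ybm))
    (hMne : Mp ≠ Mm) (hMbne : Mbp ≠ Mbm)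
    -- Assumption 4' (iii), second part: equality of the O and M jumps across cohorts
    (hOMjump : Op - Om = Mp - Mm) :
    (Yp - Ym) / (Tp - Tm) - (Ybp - Ybm) / (Mbp - Mbm) = y11 t - y01 t := by
  have hTM : ∀ x, ET x = EM x := fun x => by
    rw [hET, hEM, integral_mul_eq_integral_of_ae_le (hν x) hO01 hM01 hdom]
  have hTp' : Tp = Mp := tendsto_nhds_unique (hTp.congr hTM) hMp
  have hTm' : Tm = Mm := tendsto_nhds_unique (hTm.congr hTM) hMm
  have hYp' := limit_eq_of_two_treatment_switching nhdsWithin_le_nhds hY h11 h10 h01 h00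
    hOp hMp (hTp' ▸ hTp) hYp
  have hYm' := limit_eq_of_two_treatment_switching nhdsWithin_le_nhds hY h11 h10 h01 h00
    hOm hMm (hTm' ▸ hTm) hYm
  have hYbp' := limit_eq_of_one_treatment_switching nhdsWithin_le_nhds hYb hz1 hz0 hMbp hYbp
  have hYbm' := limit_eq_of_one_treatment_switching nhdsWithin_le_nhds hYb hz1 hz0 hMbm hYbm
  have hYjump : Yp - Ym = (Mp - Mm) * (y11 t - y00 t) := by
    rw [hYp', hYm']
    linear_combination (y10 t - y00 t) * hOMjump
  have hYbjump : Ybp - Ybm = (Mbp - Mbm) * (y01 t - y00 t) := by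
    rw [hYbp', hYbm', ← hA3]
    ring
  rw [hTp', hTm', hYjump, hYbjump, mul_div_cancel_left₀ _ (sub_ne_zero.mpr hMne),
    mul_div_cancel_left₀ _ (sub_ne_zero.mpr hMbne)]
  ring

/-- Theorem 2: Under the dominance condition `O ≥ M` a.s. together with
Assumptions 1–3 and Assumption 4' (existence of the limits, nondegenerate jumps of `O` and `M`,
and `Õ⁺−Õ⁻ = M̃⁺−M̃⁻ = M̄⁺−M̄⁻`), the fuzzy difference-in-discontinuities estimand
`τ = (Ỹ⁺−Ỹ⁻)/(T̃⁺−T̃⁻) − (Ȳ⁺−Ȳ⁻)/(M̄⁺−M̄⁻)` identifies `ATE_O(t) = E[Y(1,1)−Y(0,1)|X=t]`.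
The young-cohort conditional means given `X = x` are modeled via conditional laws `ν x ≪ μ`. -/
theorem fuzzy_diff_in_disc_identification_dominance
    {Ω : Type*} [MeasurableSpace Ω]
    (μ : Measure Ω) [IsProbabilityMeasure μ]
    (ν : ℝ → Measure Ω) [∀ x, IsProbabilityMeasure (ν x)]
    (hν : ∀ x, ν x ≪ μ)
    (O M : Ω → ℝ) (hOmeas : Measurable O) (hMmeas : Measurable M)
    (hO01 : ∀ ω, O ω = 0 ∨ O ω = 1) (hM01 : ∀ ω, M ω = 0 ∨ M ω = 1)
    -- Assumption 4' (iii), first part: dominance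
    (hdom : ∀ᵐ ω ∂μ, M ω ≤ O ω)
    (t : ℝ)
    (y11 y10 y01 y00 z1 z0 : ℝ → ℝ)
    (EY EO EM ET EYb EMb : ℝ → ℝ)
    (hEO : ∀ x, EO x = ∫ ω, O ω ∂(ν x))
    (hEM : ∀ x, EM x = ∫ ω, M ω ∂(ν x))
    (hET : ∀ x, ET x = ∫ ω, O ω * M ω ∂(ν x))
    -- Assumption 1
    (h11 : ContinuousAt y11 t) (h10 : ContinuousAt y10 t)
    (h01 : ContinuousAt y01 t) (h00 : ContinuousAt y00 t)
    (hz1 : ContinuousAt z1 t) (hz0 : ContinuousAt z0 t)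
    -- Assumption 2 (switching identities)
    (hY : ∀ x, EY x = y00 x + EM x * (y01 x - y00 x) + EO x * (y10 x - y00 x)
        + ET x * (y11 x - y10 x - y01 x + y00 x))
    (hYb : ∀ x, EYb x = z0 x + EMb x * (z1 x - z0 x))
    -- Assumption 3
    (hA3 : z1 t - z0 t = y01 t - y00 t)
    -- Assumption 4' (i), (ii)
    (Op Om Mp Mm Tp Tm Yp Ym Mbp Mbm Ybp Ybm : ℝ)
    (hOp : Tendsto EO (𝓝[>] t) (𝓝 Op)) (hOm : Tendsto EO (𝓝[<] t) (𝓝 Om))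
    (hMp : Tendsto EM (𝓝[>] t) (𝓝 Mp)) (hMm : Tendsto EM (𝓝[<] t) (𝓝 Mm))
    (hTp : Tendsto ET (𝓝[>] t) (𝓝 Tp)) (hTm : Tendsto ET (𝓝[<] t) (𝓝 Tm))
    (hYp : Tendsto EY (𝓝[>] t) (𝓝 Yp)) (hYm : Tendsto EY (𝓝[<] t) (𝓝 Ym))
    (hMbp : Tendsto EMb (𝓝[>] t) (𝓝 Mbp)) (hMbm : Tendsto EMb (𝓝[<] t) (𝓝 Mbm))
    (hYbp : Tendsto EYb (𝓝[>] t) (𝓝 Ybp)) (hYbm : Tendsto EYb (𝓝[<] t) (𝓝 Ybm))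
    (hOne : Op ≠ Om) (hMne : Mp ≠ Mm) (hMbne : Mbp ≠ Mbm)
    -- Assumption 4' (iii), second part: equality of the O and M jumps across cohorts
    (hOMjump : Op - Om = Mp - Mm) (hMMbjump : Mp - Mm = Mbp - Mbm) :
    (Yp - Ym) / (Tp - Tm) - (Ybp - Ybm) / (Mbp - Mbm) = y11 t - y01 t :=
  fuzzy_diff_in_disc_identification_dominance_general μ ν hν O M hO01 hM01 hdom t y11 y10 y01 y00 z1
    z0 EY EO EM ET EYb EMb hEM hET h11 h10 h01 h00 hz1 hz0 hY hYb hA3 Op Om Mp Mm Tp Tm Yp Ym Mbp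
    Mbm Ybp Ybm hOp hOm hMp hMm hTp hTm hYp hYm hMbp hMbm hYbp hYbm hMne hMbne hOMjump
end

section
/- Under Assumptions 1, 2, and 4(i),(ii), the jump in the conditional mean outcome of the old cohort (treated only by M) satisfies Ȳ⁺−Ȳ⁻ = (M̄⁺−M̄⁻)(Ȳ(0,1)−Ȳ(0,0)). -/
open Filter Topology

/-- Under Assumptions 1, 2 and 4(i),(ii), the jump in the conditional mean outcome
of the old cohort (treated only by `M`) satisfies `Ȳ⁺−Ȳ⁻ = (M̄⁺−M̄⁻)(Ȳ(0,1)−Ȳ(0,0))`.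
Assumption 2 is encoded by the switching identity `hYb` for the observed conditional mean. -/
theorem old_cohort_jump_factorization
    (t : ℝ)
    (z1 z0 : ℝ → ℝ)          -- old-cohort x ↦ E[Y(0,1)|X=x] and x ↦ E[Y(0,0)|X=x]
    (EYb EMb : ℝ → ℝ)
    -- Assumption 1
    (hz1 : ContinuousAt z1 t) (hz0 : ContinuousAt z0 t)
    -- Assumption 2
    (hYb : ∀ x, EYb x = z0 x + EMb x * (z1 x - z0 x))
    -- Assumption 4 (i), (ii)
    (Mbp Mbm Ybp Ybm : ℝ)
    (hMbp : Tendsto EMb (𝓝[>] t) (𝓝 Mbp)) (hMbm : Tendsto EMb (𝓝[<] t) (𝓝 Mbm))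
    (hYbp : Tendsto EYb (𝓝[>] t) (𝓝 Ybp)) (hYbm : Tendsto EYb (𝓝[<] t) (𝓝 Ybm))
    (hMbne : Mbp ≠ Mbm) :
    Ybp - Ybm = (Mbp - Mbm) * (z1 t - z0 t) := by
  have hz1p := hz1.continuousWithinAt (s := Set.Ioi t)
  have hz0p := hz0.continuousWithinAt (s := Set.Ioi t)
  have hz1m := hz1.continuousWithinAt (s := Set.Iio t)
  have hz0m := hz0.continuousWithinAt (s := Set.Iio t)
  have hp : Tendsto EYb (𝓝[>] t) (𝓝 (z0 t + Mbp * (z1 t - z0 t))) := by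
    have := hz0p.tendsto.add (hMbp.mul (hz1p.tendsto.sub hz0p.tendsto))
    exact this.congr fun x => (hYb x).symm
  have hm : Tendsto EYb (𝓝[<] t) (𝓝 (z0 t + Mbm * (z1 t - z0 t))) := by
    have := hz0m.tendsto.add (hMbm.mul (hz1m.tendsto.sub hz0m.tendsto))
    exact this.congr fun x => (hYb x).symm
  have e1 : Ybp = z0 t + Mbp * (z1 t - z0 t) := tendsto_nhds_unique hYbp hp
  have e2 : Ybm = z0 t + Mbm * (z1 t - z0 t) := tendsto_nhds_unique hYbm hm
  rw [e1, e2]; ring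
end

section
/- Under Assumptions 1–4, the fuzzy difference-in-discontinuities estimand satisfies the exact bias decomposition τ = ATE_O(t) − [1 − (Õ⁺−Õ⁻)/(T̃⁺−T̃⁻)]·(Ỹ(1,0)−Ỹ(0,0)) − [1 − (M̃⁺−M̃⁻)/(T̃⁺−T̃⁻)]·(Ỹ(0,1)−Ỹ(0,0)). -/
open Filter Topology

/-- Under Assumptions 1–4, the fuzzy difference-in-discontinuities estimand
`τ = (Ỹ⁺−Ỹ⁻)/(T̃⁺−T̃⁻) − (Ȳ⁺−Ȳ⁻)/(M̄⁺−M̄⁻)` satisfies the exact bias decomposition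
`τ = ATE_O(t) − [1 − (Õ⁺−Õ⁻)/(T̃⁺−T̃⁻)]·(Ỹ(1,0)−Ỹ(0,0)) − [1 − (M̃⁺−M̃⁻)/(T̃⁺−T̃⁻)]·(Ỹ(0,1)−Ỹ(0,0))`,
where `ATE_O(t) = Ỹ(1,1)−Ỹ(0,1)`. -/
theorem fuzzy_diff_in_disc_bias_decomposition
    (t : ℝ)
    (y11 y10 y01 y00 z1 z0 : ℝ → ℝ)
    (EY EO EM ET EYb EMb : ℝ → ℝ)
    -- Assumption 1
    (h11 : ContinuousAt y11 t) (h10 : ContinuousAt y10 t)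
    (h01 : ContinuousAt y01 t) (h00 : ContinuousAt y00 t)
    (hz1 : ContinuousAt z1 t) (hz0 : ContinuousAt z0 t)
    -- Assumption 2 (switching identities)
    (hY : ∀ x, EY x = y00 x + EM x * (y01 x - y00 x) + EO x * (y10 x - y00 x)
        + ET x * (y11 x - y10 x - y01 x + y00 x))
    (hYb : ∀ x, EYb x = z0 x + EMb x * (z1 x - z0 x))
    -- Assumption 3
    (hA3 : z1 t - z0 t = y01 t - y00 t)
    -- Assumption 4
    (Op Om Mp Mm Tp Tm Yp Ym Mbp Mbm Ybp Ybm : ℝ)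
    (hOp : Tendsto EO (𝓝[>] t) (𝓝 Op)) (hOm : Tendsto EO (𝓝[<] t) (𝓝 Om))
    (hMp : Tendsto EM (𝓝[>] t) (𝓝 Mp)) (hMm : Tendsto EM (𝓝[<] t) (𝓝 Mm))
    (hTp : Tendsto ET (𝓝[>] t) (𝓝 Tp)) (hTm : Tendsto ET (𝓝[<] t) (𝓝 Tm))
    (hYp : Tendsto EY (𝓝[>] t) (𝓝 Yp)) (hYm : Tendsto EY (𝓝[<] t) (𝓝 Ym))
    (hMbp : Tendsto EMb (𝓝[>] t) (𝓝 Mbp)) (hMbm : Tendsto EMb (𝓝[<] t) (𝓝 Mbm))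
    (hYbp : Tendsto EYb (𝓝[>] t) (𝓝 Ybp)) (hYbm : Tendsto EYb (𝓝[<] t) (𝓝 Ybm))
    (hTne : Tp ≠ Tm) (hMbne : Mbp ≠ Mbm) :
    (Yp - Ym) / (Tp - Tm) - (Ybp - Ybm) / (Mbp - Mbm)
      = (y11 t - y01 t) - (1 - (Op - Om) / (Tp - Tm)) * (y10 t - y00 t)
        - (1 - (Mp - Mm) / (Tp - Tm)) * (y01 t - y00 t) := by

  have key : ∀ (l : Filter ℝ) [l.NeBot], l ≤ 𝓝 t →
      ∀ (Y O M T Mb Yb : ℝ),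
      Tendsto EY l (𝓝 Y) → Tendsto EO l (𝓝 O) → Tendsto EM l (𝓝 M) →
      Tendsto ET l (𝓝 T) → Tendsto EMb l (𝓝 Mb) → Tendsto EYb l (𝓝 Yb) →
      Y = y00 t + M * (y01 t - y00 t) + O * (y10 t - y00 t)
        + T * (y11 t - y10 t - y01 t + y00 t)
      ∧ Yb = z0 t + Mb * (z1 t - z0 t) := by
    intro l hl hle Y O M T Mb Yb hY' hO' hM' hT' hMb' hYb'
    have c00 : Tendsto y00 l (𝓝 (y00 t)) := h00.tendsto.mono_left hle
    have c01 : Tendsto y01 l (𝓝 (y01 t)) := h01.tendsto.mono_left hle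
    have c10 : Tendsto y10 l (𝓝 (y10 t)) := h10.tendsto.mono_left hle
    have c11 : Tendsto y11 l (𝓝 (y11 t)) := h11.tendsto.mono_left hle
    have cz0 : Tendsto z0 l (𝓝 (z0 t)) := hz0.tendsto.mono_left hle
    have cz1 : Tendsto z1 l (𝓝 (z1 t)) := hz1.tendsto.mono_left hle
    constructor
    · refine tendsto_nhds_unique hY' ?_
      have : Tendsto (fun x => y00 x + EM x * (y01 x - y00 x) + EO x * (y10 x - y00 x)
          + ET x * (y11 x - y10 x - y01 x + y00 x)) l
          (𝓝 (y00 t + M * (y01 t - y00 t) + O * (y10 t - y00 t)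
            + T * (y11 t - y10 t - y01 t + y00 t))) := by
        exact ((c00.add (hM'.mul (c01.sub c00))).add (hO'.mul (c10.sub c00))).add
          (hT'.mul (((c11.sub c10).sub c01).add c00))
      exact this.congr (fun x => (hY x).symm)
    · refine tendsto_nhds_unique hYb' ?_
      have : Tendsto (fun x => z0 x + EMb x * (z1 x - z0 x)) l
          (𝓝 (z0 t + Mb * (z1 t - z0 t))) := cz0.add (hMb'.mul (cz1.sub cz0))
      exact this.congr (fun x => (hYb x).symm)
  obtain ⟨hYpEq, hYbpEq⟩ := key (𝓝[>] t) nhdsWithin_le_nhds Yp Op Mp Tp Mbp Ybp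
    hYp hOp hMp hTp hMbp hYbp
  obtain ⟨hYmEq, hYbmEq⟩ := key (𝓝[<] t) nhdsWithin_le_nhds Ym Om Mm Tm Mbm Ybm
    hYm hOm hMm hTm hMbm hYbm
  have hT0 : Tp - Tm ≠ 0 := sub_ne_zero.mpr hTne
  have hMb0 : Mbp - Mbm ≠ 0 := sub_ne_zero.mpr hMbne
  have h2 : (Ybp - Ybm) / (Mbp - Mbm) = y01 t - y00 t := by
    rw [hYbpEq, hYbmEq, hA3]
    field_simp
    ring
  rw [h2, hYpEq, hYmEq]
  field_simp
  ring
end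

section
/- Under Assumptions 1–3, 4(i),(ii), and additivity of the two treatments (Ỹ(1,1)−Ỹ(0,1) = Ỹ(1,0)−Ỹ(0,0)), the average treatment effect satisfies ATE_O(t) = [(T̃⁺−T̃⁻)/(Õ⁺−Õ⁻)]·{ τ + [1 − (M̃⁺−M̃⁻)/(T̃⁺−T̃⁻)]·ATE_M(t) }, where ATE_M(t) = Ỹ(0,1)−Ỹ(0,0) and τ is the fuzzy difference-in-discontinuities estimand. -/
open Filter Topology

/-- Theorem 3a: Under Assumptions 1–3, 4(i),(ii) and additivity of the two
treatments (Assumption 5': `Ỹ(1,1)−Ỹ(0,1) = Ỹ(1,0)−Ỹ(0,0)`), the average treatment effect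
satisfies `ATE_O(t) = [(T̃⁺−T̃⁻)/(Õ⁺−Õ⁻)]·{ τ + [1 − (M̃⁺−M̃⁻)/(T̃⁺−T̃⁻)]·ATE_M(t) }`,
where `ATE_M(t) = Ỹ(0,1)−Ỹ(0,0)` and `τ` is the fuzzy difference-in-discontinuities estimand. -/
theorem ate_additive_identification
    (t : ℝ)
    (y11 y10 y01 y00 z1 z0 : ℝ → ℝ)
    (EY EO EM ET EYb EMb : ℝ → ℝ)
    -- Assumption 1
    (h11 : ContinuousAt y11 t) (h10 : ContinuousAt y10 t)
    (h01 : ContinuousAt y01 t) (h00 : ContinuousAt y00 t)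
    (hz1 : ContinuousAt z1 t) (hz0 : ContinuousAt z0 t)
    -- Assumption 2 (switching identities)
    (hY : ∀ x, EY x = y00 x + EM x * (y01 x - y00 x) + EO x * (y10 x - y00 x)
        + ET x * (y11 x - y10 x - y01 x + y00 x))
    (hYb : ∀ x, EYb x = z0 x + EMb x * (z1 x - z0 x))
    -- Assumption 3
    (hA3 : z1 t - z0 t = y01 t - y00 t)
    -- Assumption 4 (i), (ii)
    (Op Om Mp Mm Tp Tm Yp Ym Mbp Mbm Ybp Ybm : ℝ)
    (hOp : Tendsto EO (𝓝[>] t) (𝓝 Op)) (hOm : Tendsto EO (𝓝[<] t) (𝓝 Om))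
    (hMp : Tendsto EM (𝓝[>] t) (𝓝 Mp)) (hMm : Tendsto EM (𝓝[<] t) (𝓝 Mm))
    (hTp : Tendsto ET (𝓝[>] t) (𝓝 Tp)) (hTm : Tendsto ET (𝓝[<] t) (𝓝 Tm))
    (hYp : Tendsto EY (𝓝[>] t) (𝓝 Yp)) (hYm : Tendsto EY (𝓝[<] t) (𝓝 Ym))
    (hMbp : Tendsto EMb (𝓝[>] t) (𝓝 Mbp)) (hMbm : Tendsto EMb (𝓝[<] t) (𝓝 Mbm))
    (hYbp : Tendsto EYb (𝓝[>] t) (𝓝 Ybp)) (hYbm : Tendsto EYb (𝓝[<] t) (𝓝 Ybm))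
    (hOne : Op ≠ Om) (hTne : Tp ≠ Tm) (hMbne : Mbp ≠ Mbm)
    -- Assumption 5': additivity
    (hA5' : y11 t - y01 t = y10 t - y00 t) :
    y11 t - y01 t
      = (Tp - Tm) / (Op - Om)
        * (((Yp - Ym) / (Tp - Tm) - (Ybp - Ybm) / (Mbp - Mbm))
            + (1 - (Mp - Mm) / (Tp - Tm)) * (y01 t - y00 t)) := by
  have tp : ∀ f : ℝ → ℝ, ContinuousAt f t → Tendsto f (𝓝[>] t) (𝓝 (f t)) :=
    fun f hf => hf.tendsto.mono_left nhdsWithin_le_nhds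
  have tm : ∀ f : ℝ → ℝ, ContinuousAt f t → Tendsto f (𝓝[<] t) (𝓝 (f t)) :=
    fun f hf => hf.tendsto.mono_left nhdsWithin_le_nhds
  have limYp : Yp = y00 t + Mp * (y01 t - y00 t) + Op * (y10 t - y00 t)
      + Tp * (y11 t - y10 t - y01 t + y00 t) := by
    refine tendsto_nhds_unique hYp ?_
    have : Tendsto (fun x => y00 x + EM x * (y01 x - y00 x) + EO x * (y10 x - y00 x)
        + ET x * (y11 x - y10 x - y01 x + y00 x)) (𝓝[>] t)
        (𝓝 (y00 t + Mp * (y01 t - y00 t) + Op * (y10 t - y00 t)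
            + Tp * (y11 t - y10 t - y01 t + y00 t))) :=
      (((tp _ h00).add (hMp.mul ((tp _ h01).sub (tp _ h00)))).add
        (hOp.mul ((tp _ h10).sub (tp _ h00)))).add
        (hTp.mul ((((tp _ h11).sub (tp _ h10)).sub (tp _ h01)).add (tp _ h00)))
    exact this.congr fun x => (hY x).symm
  have limYm : Ym = y00 t + Mm * (y01 t - y00 t) + Om * (y10 t - y00 t)
      + Tm * (y11 t - y10 t - y01 t + y00 t) := by
    refine tendsto_nhds_unique hYm ?_
    have : Tendsto (fun x => y00 x + EM x * (y01 x - y00 x) + EO x * (y10 x - y00 x)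
        + ET x * (y11 x - y10 x - y01 x + y00 x)) (𝓝[<] t)
        (𝓝 (y00 t + Mm * (y01 t - y00 t) + Om * (y10 t - y00 t)
            + Tm * (y11 t - y10 t - y01 t + y00 t))) :=
      (((tm _ h00).add (hMm.mul ((tm _ h01).sub (tm _ h00)))).add
        (hOm.mul ((tm _ h10).sub (tm _ h00)))).add
        (hTm.mul ((((tm _ h11).sub (tm _ h10)).sub (tm _ h01)).add (tm _ h00)))
    exact this.congr fun x => (hY x).symm
  have limYbp : Ybp = z0 t + Mbp * (z1 t - z0 t) := by
    refine tendsto_nhds_unique hYbp ?_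
    have : Tendsto (fun x => z0 x + EMb x * (z1 x - z0 x)) (𝓝[>] t)
        (𝓝 (z0 t + Mbp * (z1 t - z0 t))) :=
      (tp _ hz0).add (hMbp.mul ((tp _ hz1).sub (tp _ hz0)))
    exact this.congr fun x => (hYb x).symm
  have limYbm : Ybm = z0 t + Mbm * (z1 t - z0 t) := by
    refine tendsto_nhds_unique hYbm ?_
    have : Tendsto (fun x => z0 x + EMb x * (z1 x - z0 x)) (𝓝[<] t)
        (𝓝 (z0 t + Mbm * (z1 t - z0 t))) :=
      (tm _ hz0).add (hMbm.mul ((tm _ hz1).sub (tm _ hz0)))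
    exact this.congr fun x => (hYb x).symm
  have hO : Op - Om ≠ 0 := sub_ne_zero.mpr hOne
  have hT : Tp - Tm ≠ 0 := sub_ne_zero.mpr hTne
  have hMb : Mbp - Mbm ≠ 0 := sub_ne_zero.mpr hMbne
  subst limYp limYm limYbp limYbm
  rw [hA3] at *
  rw [show y10 t = y11 t - y01 t + y00 t from by linarith]
  field_simp
  ring
end

section
/- If O ≥ M almost surely and the treatments are additive (Y(1,1)−Y(0,1) = Y(1,0)−Y(0,0)), then the second bias term in the difference-in-discontinuities decomposition vanishes: 1 − (M̃⁺−M̃⁻)/(T̃⁺−T̃⁻) = 0. -/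
open MeasureTheory Filter Topology

/-- If `O ≥ M` almost surely and the treatments are additive
(`Y(1,1)−Y(0,1) = Y(1,0)−Y(0,0)` pointwise), then the second bias term in the
difference-in-discontinuities decomposition vanishes: `1 − (M̃⁺−M̃⁻)/(T̃⁺−T̃⁻) = 0`.
Conditioning on `X = x` is modeled via conditional laws `ν x ≪ μ`. -/
theorem second_bias_term_vanishes
    {Ω : Type*} [MeasurableSpace Ω]
    (μ : Measure Ω) [IsProbabilityMeasure μ]
    (ν : ℝ → Measure Ω) [∀ x, IsProbabilityMeasure (ν x)]
    (hν : ∀ x, ν x ≪ μ)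
    (O M : Ω → ℝ) (hOmeas : Measurable O) (hMmeas : Measurable M)
    (hO01 : ∀ ω, O ω = 0 ∨ O ω = 1) (hM01 : ∀ ω, M ω = 0 ∨ M ω = 1)
    (hdom : ∀ᵐ ω ∂μ, M ω ≤ O ω)
    (Y11 Y10 Y01 Y00 : Ω → ℝ)
    (hadd : ∀ ω, Y11 ω - Y01 ω = Y10 ω - Y00 ω)
    (t : ℝ) (EM ET : ℝ → ℝ)
    (hEM : ∀ x, EM x = ∫ ω, M ω ∂(ν x))
    (hET : ∀ x, ET x = ∫ ω, O ω * M ω ∂(ν x))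
    (Mp Mm Tp Tm : ℝ)
    (hMp : Tendsto EM (𝓝[>] t) (𝓝 Mp)) (hMm : Tendsto EM (𝓝[<] t) (𝓝 Mm))
    (hTp : Tendsto ET (𝓝[>] t) (𝓝 Tp)) (hTm : Tendsto ET (𝓝[<] t) (𝓝 Tm))
    (hTne : Tp ≠ Tm) :
    1 - (Mp - Mm) / (Tp - Tm) = 0 := by
  have heq : EM = ET := by
    funext x
    rw [hEM, hET]
    refine integral_congr_ae ?_
    have h1 : ∀ᵐ ω ∂(ν x), M ω ≤ O ω := (hν x) hdom
    filter_upwards [h1] with ω hω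
    rcases hM01 ω with h | h
    · simp [h]
    · rcases hO01 ω with h' | h'
      · exfalso; rw [h, h'] at hω; linarith
      · simp [h, h']
  have h1 : Mp = Tp := tendsto_nhds_unique (heq ▸ hMp) hTp
  have h2 : Mm = Tm := tendsto_nhds_unique (heq ▸ hMm) hTm
  rw [h1, h2, div_self (sub_ne_zero.mpr hTne)]
  ring
end

section
/- In the sharp design (deterministic treatment assignment at the cutoff) with Assumptions 1–3, the difference-in-discontinuities estimand (Ỹ⁺−Ỹ⁻) − (Ȳ⁺−Ȳ⁻) equals the average treatment effect ATE_O(t) = E[Y(1,1)−Y(0,1)|X=t]. -/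
open Filter Topology

/-- In the sharp design (deterministic assignment at the cutoff:
`O = M = T = 1{X > t}` in the young cohort, `M = 1{X > t}` in the old cohort) with
Assumptions 1–3, the difference-in-discontinuities estimand `(Ỹ⁺−Ỹ⁻) − (Ȳ⁺−Ȳ⁻)` equals the
average treatment effect `ATE_O(t) = E[Y(1,1)−Y(0,1)|X=t]`. -/
theorem sharp_diff_in_disc_identification
    (t : ℝ)
    (y11 y10 y01 y00 z1 z0 : ℝ → ℝ)
    (EY EO EM ET EYb EMb : ℝ → ℝ)
    -- Sharp design
    (hEO : ∀ x, EO x = if t < x then 1 else 0)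
    (hEM : ∀ x, EM x = if t < x then 1 else 0)
    (hET : ∀ x, ET x = if t < x then 1 else 0)
    (hEMb : ∀ x, EMb x = if t < x then 1 else 0)
    -- Assumption 1
    (h11 : ContinuousAt y11 t) (h10 : ContinuousAt y10 t)
    (h01 : ContinuousAt y01 t) (h00 : ContinuousAt y00 t)
    (hz1 : ContinuousAt z1 t) (hz0 : ContinuousAt z0 t)
    -- Assumption 2 (switching identities)
    (hY : ∀ x, EY x = y00 x + EM x * (y01 x - y00 x) + EO x * (y10 x - y00 x)
        + ET x * (y11 x - y10 x - y01 x + y00 x))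
    (hYb : ∀ x, EYb x = z0 x + EMb x * (z1 x - z0 x))
    -- Assumption 3
    (hA3 : z1 t - z0 t = y01 t - y00 t)
    -- one-sided limits of the observed outcome means
    (Yp Ym Ybp Ybm : ℝ)
    (hYp : Tendsto EY (𝓝[>] t) (𝓝 Yp)) (hYm : Tendsto EY (𝓝[<] t) (𝓝 Ym))
    (hYbp : Tendsto EYb (𝓝[>] t) (𝓝 Ybp)) (hYbm : Tendsto EYb (𝓝[<] t) (𝓝 Ybm)) :
    (Yp - Ym) - (Ybp - Ybm) = y11 t - y01 t := by
  have hright : ∀ x ∈ Set.Ioi t, EY x = y11 x := by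
    intro x hx
    simp [hY, hEO, hEM, hET, hx.out]
    ring
  have hleft : ∀ x ∈ Set.Iio t, EY x = y00 x := by
    intro x hx
    simp [hY, hEO, hEM, hET, not_lt.mpr hx.out.le]
  have hbright : ∀ x ∈ Set.Ioi t, EYb x = z1 x := by
    intro x hx
    simp [hYb, hEMb, hx.out]
  have hbleft : ∀ x ∈ Set.Iio t, EYb x = z0 x := by
    intro x hx
    simp [hYb, hEMb, not_lt.mpr hx.out.le]
  have l1 : Tendsto EY (𝓝[>] t) (𝓝 (y11 t)) :=
    ((h11.continuousWithinAt (s := Set.Ioi t)).tendsto).congr'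
      (eventually_nhdsWithin_of_forall fun x hx => (hright x hx).symm)
  have l2 : Tendsto EY (𝓝[<] t) (𝓝 (y00 t)) :=
    ((h00.continuousWithinAt (s := Set.Iio t)).tendsto).congr'
      (eventually_nhdsWithin_of_forall fun x hx => (hleft x hx).symm)
  have l3 : Tendsto EYb (𝓝[>] t) (𝓝 (z1 t)) :=
    ((hz1.continuousWithinAt (s := Set.Ioi t)).tendsto).congr'
      (eventually_nhdsWithin_of_forall fun x hx => (hbright x hx).symm)
  have l4 : Tendsto EYb (𝓝[<] t) (𝓝 (z0 t)) :=
    ((hz0.continuousWithinAt (s := Set.Iio t)).tendsto).congr'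
      (eventually_nhdsWithin_of_forall fun x hx => (hbleft x hx).symm)
  have e1 : Yp = y11 t := tendsto_nhds_unique hYp l1
  have e2 : Ym = y00 t := tendsto_nhds_unique hYm l2
  have e3 : Ybp = z1 t := tendsto_nhds_unique hYbp l3
  have e4 : Ybm = z0 t := tendsto_nhds_unique hYbm l4
  rw [e1, e2, e3, e4]
  linarith
end

section
/- For the old cohort under independence and monotonicity, the outcome jump over the window (t−e, t+e) factors as E[Ȳ|X=t+e]−E[Ȳ|X=t−e] = E[Y(0,1)−Y(0,0) | M(t+e)−M(t−e)=1, c∈L̄] · (E[M|X=t+e, c∈L̄] − E[M|X=t−e, c∈L̄]). -/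
/-!
Write `Δ = Y(0,1) - Y(0,0)`. The observed outcome is `Y(0,0) + M·Δ`, so the outcome jump is
`E[(M(t+e) - M(t-e))·Δ]`. For binary treatment states, monotonicity makes `M(t+e) - M(t-e)` the
indicator of the compliers `C`, so the jump is `∫_C Δ`, and the jump in `E[M]` is `P(C)`; the
factorization is `∫_C Δ = (∫_C Δ / P(C)) · P(C)`, where the case `P(C) = 0` is harmless because
then `∫_C Δ = 0` as well.
-/

open MeasureTheory

section

variable {Ω : Type*}

lemma norm_le_one_of_binary {M : Ω → ℝ} (hM : ∀ ω, M ω = 0 ∨ M ω = 1) (ω : Ω) : ‖M ω‖ ≤ 1 := by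
  rcases hM ω with h | h <;> simp [h]

variable [MeasurableSpace Ω] {μ : Measure Ω}

lemma integrable_of_binary [IsFiniteMeasure μ] {M : Ω → ℝ} (hMmeas : AEStronglyMeasurable M μ)
    (hM : ∀ ω, M ω = 0 ∨ M ω = 1) : Integrable M μ :=
  (integrable_const 1).mono' hMmeas (.of_forall (norm_le_one_of_binary hM))

lemma integrable_mixture {M Y1 Y0 : Ω → ℝ} {C : ℝ} (hM : AEStronglyMeasurable M μ)
    (hMbdd : ∀ᵐ ω ∂μ, ‖M ω‖ ≤ C) (hY1 : Integrable Y1 μ) (hY0 : Integrable Y0 μ) :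
    Integrable (fun ω => M ω * Y1 ω + (1 - M ω) * Y0 ω) μ := by
  have hmix : (fun ω => M ω * Y1 ω + (1 - M ω) * Y0 ω) = fun ω => Y0 ω + M ω * (Y1 - Y0) ω := by
    funext ω; simp only [Pi.sub_apply]; ring
  rw [hmix]
  exact hY0.add ((hY1.sub hY0).bdd_mul hM hMbdd)

lemma integral_mixture_sub_integral_mixture {M1 M0 Y1 Y0 : Ω → ℝ} {C : ℝ}
    (hM1 : AEStronglyMeasurable M1 μ) (hM1bdd : ∀ᵐ ω ∂μ, ‖M1 ω‖ ≤ C)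
    (hM0 : AEStronglyMeasurable M0 μ) (hM0bdd : ∀ᵐ ω ∂μ, ‖M0 ω‖ ≤ C)
    (hY1 : Integrable Y1 μ) (hY0 : Integrable Y0 μ) :
    (∫ ω, (M1 ω * Y1 ω + (1 - M1 ω) * Y0 ω) ∂μ) - ∫ ω, (M0 ω * Y1 ω + (1 - M0 ω) * Y0 ω) ∂μ
      = ∫ ω, (M1 ω - M0 ω) * (Y1 ω - Y0 ω) ∂μ := by
  rw [← integral_sub (integrable_mixture hM1 hM1bdd hY1 hY0)
    (integrable_mixture hM0 hM0bdd hY1 hY0)]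
  congr 1; funext ω; ring

lemma sub_ae_eq_indicator_of_binary {M1 M0 : Ω → ℝ} (hM1 : ∀ ω, M1 ω = 0 ∨ M1 ω = 1)
    (hM0 : ∀ ω, M0 ω = 0 ∨ M0 ω = 1) (hmono : ∀ᵐ ω ∂μ, M0 ω ≤ M1 ω) :
    (fun ω => M1 ω - M0 ω) =ᵐ[μ] {ω | M1 ω - M0 ω = 1}.indicator 1 := by
  filter_upwards [hmono] with ω hω
  rw [Set.indicator_apply]
  split_ifs with hcomplier
  · exact hcomplier
  · rcases hM1 ω with h1 | h1 <;> rcases hM0 ω with h0 | h0 <;> grind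

lemma integral_mul_eq_setIntegral_of_ae_eq_indicator {D f : Ω → ℝ} {s : Set Ω}
    (hs : MeasurableSet s) (hD : D =ᵐ[μ] s.indicator 1) :
    ∫ ω, D ω * f ω ∂μ = ∫ ω in s, f ω ∂μ := by
  rw [← integral_indicator hs]
  refine integral_congr_ae ?_
  filter_upwards [hD] with ω hω
  by_cases h : ω ∈ s <;> simp [hω, h]

lemma setIntegral_div_measureReal_mul [IsFiniteMeasure μ] (f : Ω → ℝ) (s : Set Ω) :
    (∫ ω in s, f ω ∂μ) / μ.real s * μ.real s = ∫ ω in s, f ω ∂μ := by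
  calc (∫ ω in s, f ω ∂μ) / μ.real s * μ.real s = μ.real s • ⨍ ω in s, f ω ∂μ := by
        rw [setAverage_eq, smul_eq_mul, smul_eq_mul]; ring
    _ = ∫ ω in s, f ω ∂μ := measure_smul_setAverage f (measure_ne_top μ s)

end

/-- For the old cohort (where only the confounding treatment `M` applies, so the
observed outcome is `M·Y(0,1)+(1−M)·Y(0,0)`), under independence (Assumption 6(i): conditional
expectations given `X = t±e` equal unconditional ones with the treatment state at `t±e`) and
monotonicity (Assumption 6(ii)), the outcome jump over the window `(t−e, t+e)` factors as
`E[Ȳ|X=t+e]−E[Ȳ|X=t−e] = E[Y(0,1)−Y(0,0) | M(t+e)−M(t−e)=1] · (E[M|X=t+e]−E[M|X=t−e])`.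
Here `M1 = M(t+e)`, `M0 = M(t−e)` are the treatment states of the old cohort. -/
theorem old_cohort_window_factorization
    {Ω : Type*} [MeasurableSpace Ω]
    (μ : Measure Ω) [IsProbabilityMeasure μ]
    (M1 M0 Y01 Y00 : Ω → ℝ)
    (hM1meas : Measurable M1) (hM0meas : Measurable M0)
    (hM1bin : ∀ ω, M1 ω = 0 ∨ M1 ω = 1) (hM0bin : ∀ ω, M0 ω = 0 ∨ M0 ω = 1)
    -- Assumption 6(ii): monotonicity
    (hmono : ∀ᵐ ω ∂μ, M0 ω ≤ M1 ω)
    (hY01 : Integrable Y01 μ) (hY00 : Integrable Y00 μ) :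
    (∫ ω, (M1 ω * Y01 ω + (1 - M1 ω) * Y00 ω) ∂μ)
        - ∫ ω, (M0 ω * Y01 ω + (1 - M0 ω) * Y00 ω) ∂μ
      = ((∫ ω in {ω | M1 ω - M0 ω = 1}, (Y01 ω - Y00 ω) ∂μ)
            / (μ {ω | M1 ω - M0 ω = 1}).toReal)
        * ((∫ ω, M1 ω ∂μ) - ∫ ω, M0 ω ∂μ) := by
  set S : Set Ω := {ω | M1 ω - M0 ω = 1}
  have hS : MeasurableSet S := (hM1meas.sub hM0meas) (measurableSet_singleton 1)
  have hcomplier : (fun ω => M1 ω - M0 ω) =ᵐ[μ] S.indicator 1 :=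
    sub_ae_eq_indicator_of_binary hM1bin hM0bin hmono
  have houtcome_jump : (∫ ω, (M1 ω * Y01 ω + (1 - M1 ω) * Y00 ω) ∂μ)
      - ∫ ω, (M0 ω * Y01 ω + (1 - M0 ω) * Y00 ω) ∂μ = ∫ ω in S, (Y01 ω - Y00 ω) ∂μ := by
    rw [integral_mixture_sub_integral_mixture hM1meas.aestronglyMeasurable
        (.of_forall (norm_le_one_of_binary hM1bin)) hM0meas.aestronglyMeasurable
        (.of_forall (norm_le_one_of_binary hM0bin)) hY01 hY00]
    exact integral_mul_eq_setIntegral_of_ae_eq_indicator hS hcomplier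
  have htreatment_jump : (∫ ω, M1 ω ∂μ) - ∫ ω, M0 ω ∂μ = μ.real S := by
    rw [← integral_sub (integrable_of_binary hM1meas.aestronglyMeasurable hM1bin)
        (integrable_of_binary hM0meas.aestronglyMeasurable hM0bin),
      integral_congr_ae hcomplier, integral_indicator_one hS]
  rw [houtcome_jump, htreatment_jump]
  exact (setIntegral_div_measureReal_mul _ S).symm
end
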